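/- Let n ≥ 1 and let p, q ∈ H satisfy ‖p‖_Z = ‖q‖_Z = 1. Then ‖p − q‖_Z = 2 if and only if there exists an index i with p(i) = max_j p(j) and q(i) = min_j q(j), and there exists an index k with p(k) = min_j p(j) and q(k) = max_j q(j). -/
import Mathlib


/-- The norm of the space `M_Z^n`: `‖x‖_Z = ½(maxᵢ x(i) − minᵢ x(i))`. -/
noncomputable def normZ {n : ℕ} (x : Fin (n + 1) → ℝ) : ℝ :=
  (Finset.univ.sup' Finset.univ_nonempty x - Finset.univ.inf' Finset.univ_nonempty x) / 2

/-- Two unit vectors `p, q` of `M_Z^n` are at distance `2` if and only if some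
coordinate maximises `p` and minimises `q`, and some coordinate minimises `p` and
maximises `q`. -/
theorem dist_eq_two_iff (n : ℕ) (hn : 1 ≤ n) (p q : Fin (n + 1) → ℝ)
    (hpH : ∑ i, p i = 0) (hqH : ∑ i, q i = 0)
    (hp : normZ p = 1) (hq : normZ q = 1) :
    normZ (p - q) = 2 ↔
      ((∃ i, p i = Finset.univ.sup' Finset.univ_nonempty p ∧
          q i = Finset.univ.inf' Finset.univ_nonempty q) ∧
        (∃ k, p k = Finset.univ.inf' Finset.univ_nonempty p ∧
          q k = Finset.univ.sup' Finset.univ_nonempty q)) := by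
  classical
  have ne : (Finset.univ : Finset (Fin (n+1))).Nonempty := Finset.univ_nonempty
  unfold normZ at hp hq ⊢
  constructor
  · intro h
    obtain ⟨i, -, hi⟩ := Finset.exists_mem_eq_sup' ne (p - q)
    obtain ⟨k, -, hk⟩ := Finset.exists_mem_eq_inf' ne (p - q)
    have h1 : p i ≤ Finset.univ.sup' ne p := Finset.le_sup' p (Finset.mem_univ i)
    have h2 : Finset.univ.inf' ne q ≤ q i := Finset.inf'_le q (Finset.mem_univ i)
    have h3 : Finset.univ.inf' ne p ≤ p k := Finset.inf'_le p (Finset.mem_univ k)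
    have h4 : q k ≤ Finset.univ.sup' ne q := Finset.le_sup' q (Finset.mem_univ k)
    rw [hi, hk] at h
    simp only [Pi.sub_apply] at h
    exact ⟨⟨i, by linarith, by linarith⟩, ⟨k, by linarith, by linarith⟩⟩
  · rintro ⟨⟨i, hpi, hqi⟩, ⟨k, hpk, hqk⟩⟩
    have hub : Finset.univ.sup' Finset.univ_nonempty (p - q) = p i - q i := by
      apply le_antisymm
      · apply Finset.sup'_le
        intro j _
        have := Finset.le_sup' p (Finset.mem_univ j)
        have := Finset.inf'_le q (Finset.mem_univ j)
        simp only [Pi.sub_apply]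
        linarith
      · exact Finset.le_sup' (p - q) (Finset.mem_univ i)
    have hlb : Finset.univ.inf' Finset.univ_nonempty (p - q) = p k - q k := by
      apply le_antisymm
      · exact Finset.inf'_le (p - q) (Finset.mem_univ k)
      · apply Finset.le_inf'
        intro j _
        have := Finset.inf'_le p (Finset.mem_univ j)
        have := Finset.le_sup' q (Finset.mem_univ j)
        simp only [Pi.sub_apply]
        linarith
    rw [hub, hlb]
    linarith
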